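/- Consider the Watts–Strogatz mean-field system with inertia δ = 0 and suppose the Case-1 condition p·(α+β)·max{r, 1−r} < α holds. For every real c with 0 ≤ c < 1/2, the function θ(t) = (c·e^{−t}, c·e^{−t}) is a solution of the system on [0, ∞) with θ^B(0) = θ^R(0) = c; that is, along this trajectory both indicator conditions g^B(θ(t)) < 0 and g^R(θ(t)) < 0 hold for all t ≥ 0 and both coordinates satisfy θ' = −θ. -/

import Mathlib

open Set Filter

/-- `g^B(θ) = α(1−pr)(2θ^B−1) − βpr(2θ^R−1)`. -/
noncomputable def gB (α β p r θB θR : ℝ) : ℝ :=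
  α * (1 - p * r) * (2 * θB - 1) - β * p * r * (2 * θR - 1)

/-- `g^R(θ) = α(1−p(1−r))(2θ^R−1) − β(1−r)p(2θ^B−1)`. -/
noncomputable def gR (α β p r θB θR : ℝ) : ℝ :=
  α * (1 - p * (1 - r)) * (2 * θR - 1) - β * (1 - r) * p * (2 * θB - 1)

/-- Right-hand side of the blue equation:
`(1−θ^B)·𝟙[g^B(θ) > 0] − θ^B·𝟙[g^B(θ) < 0]`. -/
noncomputable def rhsB (α β p r θB θR : ℝ) : ℝ :=
  (1 - θB) * (if 0 < gB α β p r θB θR then 1 else 0)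
    - θB * (if gB α β p r θB θR < 0 then 1 else 0)

/-- Right-hand side of the red equation:
`(1−θ^R)·𝟙[g^R(θ) > 0] − θ^R·𝟙[g^R(θ) < 0]`. -/
noncomputable def rhsR (α β p r θB θR : ℝ) : ℝ :=
  (1 - θR) * (if 0 < gR α β p r θB θR then 1 else 0)
    - θR * (if gR α β p r θB θR < 0 then 1 else 0)

/-- `θ = (θ^B, θ^R)` is a solution of the Watts–Strogatz mean-field system
(with inertia `δ = 0`) on the set `J`: it is differentiable on `J` and satisfies
the two differential equations at every `t ∈ J`. -/
def IsWSSolutionOn (α β p r : ℝ) (θB θR : ℝ → ℝ) (J : Set ℝ) : Prop :=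
  ∀ t ∈ J,
    HasDerivWithinAt θB (rhsB α β p r (θB t) (θR t)) J t ∧
    HasDerivWithinAt θR (rhsR α β p r (θB t) (θR t)) J t

/-! Along the diagonal `θ^B = θ^R = x` both switching functions factor as
`g(x, x) = (α − p s (α + β)) (2x − 1)` with `s = r` resp. `s = 1 − r`, and the Case-1
condition makes both coefficients positive. Hence `g^B, g^R < 0` as long as `x < 1/2`,
so both equations reduce to `θ' = −θ`, which `c e^{−t}` solves and never leaves
`(−∞, 1/2)` for `t ≥ 0`. -/

section Switching

variable {α β p r : ℝ}

theorem gB_diag (α β p r x : ℝ) :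
    gB α β p r x x = (α - p * r * (α + β)) * (2 * x - 1) := by
  unfold gB; ring

theorem gR_diag (α β p r x : ℝ) :
    gR α β p r x x = (α - p * (1 - r) * (α + β)) * (2 * x - 1) := by
  unfold gR; ring

theorem rhsB_of_gB_neg {θB θR : ℝ} (h : gB α β p r θB θR < 0) : rhsB α β p r θB θR = -θB := by
  simp [rhsB, h, h.not_gt]

theorem rhsR_of_gR_neg {θB θR : ℝ} (h : gR α β p r θB θR < 0) : rhsR α β p r θB θR = -θR := by
  simp [rhsR, h, h.not_gt]

theorem isWSSolutionOn_of_gB_neg_of_gR_neg {θB θR : ℝ → ℝ} {J : Set ℝ}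
    (hgB : ∀ t ∈ J, gB α β p r (θB t) (θR t) < 0)
    (hgR : ∀ t ∈ J, gR α β p r (θB t) (θR t) < 0)
    (hθB : ∀ t ∈ J, HasDerivWithinAt θB (-θB t) J t)
    (hθR : ∀ t ∈ J, HasDerivWithinAt θR (-θR t) J t) :
    IsWSSolutionOn α β p r θB θR J := fun t ht =>
  ⟨rhsB_of_gB_neg (hgB t ht) ▸ hθB t ht, rhsR_of_gR_neg (hgR t ht) ▸ hθR t ht⟩

end Switching

theorem sub_mul_pos_of_mul_max_lt {α p s m S : ℝ} (hpS : 0 ≤ p * S) (hsm : s ≤ m)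
    (h : p * S * m < α) : 0 < α - p * s * S := by
  nlinarith [mul_le_mul_of_nonneg_left hsm hpS]

theorem hasDerivAt_const_mul_exp_neg (c t : ℝ) :
    HasDerivAt (fun t => c * Real.exp (-t)) (-(c * Real.exp (-t))) t := by
  simpa using ((hasDerivAt_neg t).exp).const_mul c

theorem const_mul_exp_neg_lt_half {c t : ℝ} (hc : c < 1 / 2) (ht : 0 ≤ t) :
    c * Real.exp (-t) < 1 / 2 := by
  have hexp_pos : 0 < Real.exp (-t) := Real.exp_pos _
  have hexp_le : Real.exp (-t) ≤ 1 := Real.exp_le_one_iff.mpr (neg_nonpos.mpr ht)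
  -- `c e^{-t} − 1/2 = (c − 1/2) e^{-t} + (e^{-t} − 1)/2`, a sum of a negative and a nonpositive term
  nlinarith [mul_neg_of_neg_of_pos (sub_neg.mpr hc) hexp_pos]

theorem ws_case1_explicit_trajectory_low_general
    (α β p r : ℝ)
    (hα : α ∈ Set.Icc (0:ℝ) 1) (hβ : β ∈ Set.Icc (0:ℝ) 1)
    (hp : p ∈ Set.Icc (0:ℝ) 1)
    (hcase : p * (α + β) * max r (1 - r) < α)
    (c : ℝ) (hc2 : c < 1 / 2) :
    (c * Real.exp (-(0:ℝ)) = c) ∧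
    IsWSSolutionOn α β p r (fun t => c * Real.exp (-t))
      (fun t => c * Real.exp (-t)) (Set.Ici 0) ∧
    ∀ t ∈ Set.Ici (0:ℝ),
      gB α β p r (c * Real.exp (-t)) (c * Real.exp (-t)) < 0 ∧
      gR α β p r (c * Real.exp (-t)) (c * Real.exp (-t)) < 0 ∧
      HasDerivWithinAt (fun t => c * Real.exp (-t))
        (-(c * Real.exp (-t))) (Set.Ici 0) t := by
  have hpS : 0 ≤ p * (α + β) := mul_nonneg hp.1 (add_nonneg hα.1 hβ.1)
  have hcoefB := sub_mul_pos_of_mul_max_lt hpS (le_max_left r (1 - r)) hcase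
  have hcoefR := sub_mul_pos_of_mul_max_lt hpS (le_max_right r (1 - r)) hcase
  have hbelow (t : ℝ) (ht : t ∈ Ici 0) : 2 * (c * Real.exp (-t)) - 1 < 0 := by
    linarith [const_mul_exp_neg_lt_half hc2 ht]
  have hgB (t : ℝ) (ht : t ∈ Ici 0) : gB α β p r (c * Real.exp (-t)) (c * Real.exp (-t)) < 0 :=
    gB_diag α β p r _ ▸ mul_neg_of_pos_of_neg hcoefB (hbelow t ht)
  have hgR (t : ℝ) (ht : t ∈ Ici 0) : gR α β p r (c * Real.exp (-t)) (c * Real.exp (-t)) < 0 :=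
    gR_diag α β p r _ ▸ mul_neg_of_pos_of_neg hcoefR (hbelow t ht)
  have hderiv (t : ℝ) (_ : t ∈ Ici 0) :=
    (hasDerivAt_const_mul_exp_neg c t).hasDerivWithinAt (s := Ici 0)
  exact ⟨by simp, isWSSolutionOn_of_gB_neg_of_gR_neg hgB hgR hderiv hderiv,
    fun t ht => ⟨hgB t ht, hgR t ht, hderiv t ht⟩⟩

/-- Under the Case-1 condition `p(α+β)max{r,1−r} < α` and `0 ≤ c < 1/2`,
the function `θ(t) = (c·e^{−t}, c·e^{−t})` is a solution of the system on `[0,∞)` with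
`θ^B(0) = θ^R(0) = c`; along this trajectory both indicator conditions `g^B(θ(t)) < 0`
and `g^R(θ(t)) < 0` hold for all `t ≥ 0` and both coordinates satisfy `θ' = −θ`. -/
theorem ws_case1_explicit_trajectory_low
    (α β p r : ℝ)
    (hα : α ∈ Set.Icc (0:ℝ) 1) (hβ : β ∈ Set.Icc (0:ℝ) 1)
    (hp : p ∈ Set.Icc (0:ℝ) 1) (hr : r ∈ Set.Ioo (0:ℝ) 1)
    (hcase : p * (α + β) * max r (1 - r) < α)
    (c : ℝ) (hc1 : 0 ≤ c) (hc2 : c < 1 / 2) :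
    (c * Real.exp (-(0:ℝ)) = c) ∧
    IsWSSolutionOn α β p r (fun t => c * Real.exp (-t))
      (fun t => c * Real.exp (-t)) (Set.Ici 0) ∧
    ∀ t ∈ Set.Ici (0:ℝ),
      gB α β p r (c * Real.exp (-t)) (c * Real.exp (-t)) < 0 ∧
      gR α β p r (c * Real.exp (-t)) (c * Real.exp (-t)) < 0 ∧
      HasDerivWithinAt (fun t => c * Real.exp (-t))
        (-(c * Real.exp (-t))) (Set.Ici 0) t :=
  ws_case1_explicit_trajectory_low_general α β p r hα hβ hp hcase c hc2
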